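/- Let u, v ∈ ℝ⁴ be linearly independent unit spacelike vectors with ⟨u,v⟩ ≤ −1. Then there is exactly one real number λ such that the vector p = (λ−1)u − λv is lightlike and satisfies ⟨p, v⟩ ≥ 0. In the tangency case ⟨u,v⟩ = −1 this λ equals 1/2 and ⟨p, v⟩ = 0. -/
import Mathlib


/-- The Lorentz (Minkowski) inner product on ℝ⁴. -/
def lor (u v : Fin 4 → ℝ) : ℝ :=
  u 0 * v 0 + u 1 * v 1 + u 2 * v 2 - u 3 * v 3

/-- A vector is lightlike if it is nonzero and Lorentz-null. -/
def IsLightlike (u : Fin 4 → ℝ) : Prop := u ≠ 0 ∧ lor u u = 0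

lemma lor_comb (u v : Fin 4 → ℝ) (a b : ℝ) :
    lor (a • u - b • v) (a • u - b • v)
      = a^2 * lor u u - 2*a*b * lor u v + b^2 * lor v v := by
  simp only [lor, Pi.sub_apply, Pi.smul_apply, smul_eq_mul]
  ring

lemma lor_comb_v (u v : Fin 4 → ℝ) (a b : ℝ) :
    lor (a • u - b • v) v = a * lor u v - b * lor v v := by
  simp only [lor, Pi.sub_apply, Pi.smul_apply, smul_eq_mul]
  ring

theorem stmt_5 (u v : Fin 4 → ℝ)
    (hu : lor u u = 1) (hv : lor v v = 1)
    (hLI : LinearIndependent ℝ ![u, v])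
    (h : lor u v ≤ -1) :
    (∃! l : ℝ, IsLightlike ((l - 1) • u - l • v) ∧
      0 ≤ lor ((l - 1) • u - l • v) v) ∧
    (lor u v = -1 →
      IsLightlike ((1 / 2 - 1 : ℝ) • u - (1 / 2 : ℝ) • v) ∧
      lor ((1 / 2 - 1 : ℝ) • u - (1 / 2 : ℝ) • v) v = 0) := by
  set c : ℝ := lor u v with hc
  have hne : ∀ l : ℝ, ((l - 1) • u - l • v) ≠ 0 := by
    intro l h0
    have h0' : (l - 1) • u + (-l) • v = 0 := by
      rw [neg_smul, ← sub_eq_add_neg]; exact h0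
    obtain ⟨h1, h2⟩ := (LinearIndependent.pair_iff.mp hLI) (l - 1) (-l) h0'
    have : l = 0 := by linarith [neg_eq_zero.mp h2]
    linarith [sub_eq_zero.mp h1]
  have hc1 : c - 1 < 0 := by linarith
  have hD : 0 ≤ (c + 1) / (c - 1) := by
    rw [div_nonneg_iff]; right; constructor <;> linarith
  set s : ℝ := Real.sqrt ((c + 1) / (c - 1)) with hsdef
  have hs0 : 0 ≤ s := Real.sqrt_nonneg _
  have hs2 : s ^ 2 = (c + 1) / (c - 1) := Real.sq_sqrt hD
  have hs2' : s ^ 2 * (c - 1) = c + 1 := by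
    rw [hs2, div_mul_cancel₀ _ hc1.ne]
  have hs2lt : s ^ 2 < 1 := by nlinarith
  have hs1 : s < 1 := by nlinarith
  constructor
  · refine ⟨(1 - s) / 2, ⟨⟨hne _, ?_⟩, ?_⟩, ?_⟩
    · rw [lor_comb, hu, hv, ← hc]
      linear_combination (-(1:ℝ)/2) * hs2'
    · rw [lor_comb_v, hv, ← hc]
      nlinarith [mul_nonneg hs0 (show (0:ℝ) ≤ 1 - c by linarith)]
    · intro l ⟨⟨_, hnull⟩, hge⟩
      rw [lor_comb, hu, hv, ← hc] at hnull
      rw [lor_comb_v, hv, ← hc] at hge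
      have ht2 : (2*l - 1)^2 = s^2 := by nlinarith
      have hfac : (2*l - 1 - s) * (2*l - 1 + s) = 0 := by nlinarith
      rcases mul_eq_zero.mp hfac with h1 | h1
      · -- 2l - 1 = s; the sign condition forces s = 0
        have hls : 2*l - 1 = s := by linarith
        have : s ≤ s^2 := by nlinarith
        have hs00 : s = 0 := by nlinarith
        rw [hs00]; linarith [hs00 ▸ hls]
      · linarith
  · intro hcm1
    have hx : c = -1 := hcm1
    refine ⟨⟨hne _, ?_⟩, ?_⟩
    · rw [lor_comb, hu, hv, ← hc, hx]; norm_num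
    · rw [lor_comb_v, hv, ← hc, hx]; norm_num
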